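/- For every t ≥ 1, the smallest PAGD residual satisfies min_{i ∈ {1,…,t}} ‖v_i − v̂_{i−1}‖ ≤ ‖v* − v_0‖ / √(L_l · Σ_{i=1}^t B_i). -/

import Mathlib

open scoped RealInnerProductSpace

section helpers
variable {V : Type*} [NormedAddCommGroup V] [InnerProductSpace ℝ V]

lemma comb_aux (p q : V) (lam : ℝ) :
    ‖(1-lam)•p + lam•q‖^2 = (1-lam)*‖p‖^2 + lam*‖q‖^2 - lam*(1-lam)*‖p-q‖^2 := by
  rw [norm_add_sq_real, norm_sub_sq_real, norm_smul, norm_smul,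
      real_inner_smul_left, real_inner_smul_right, Real.norm_eq_abs, Real.norm_eq_abs,
      mul_pow, mul_pow, sq_abs, sq_abs]
  ring

lemma comb_norm_sq (x y c : V) (lam : ℝ) :
    ‖((1-lam)•x + lam•y) - c‖^2
      = (1-lam)*‖x-c‖^2 + lam*‖y-c‖^2 - lam*(1-lam)*‖x-y‖^2 := by
  have h1 : ((1-lam)•x + lam•y) - c = (1-lam)•(x-c) + lam•(y-c) := by
    rw [smul_sub, smul_sub, sub_smul, sub_smul, one_smul, one_smul]
    abel
  have h2 : ‖x - y‖ = ‖(x-c) - (y-c)‖ := by rw [show x - y = (x-c)-(y-c) from by abel]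
  rw [h1, h2, comb_aux]

lemma strong_min (𝒱 : Set V) (hconv : Convex ℝ 𝒱) (f : V → ℝ) (μ : ℝ) (hμ : 0 ≤ μ)
    (hcomb : ∀ x y : V, ∀ lam : ℝ, 0 ≤ lam → lam ≤ 1 →
      f ((1-lam)•x + lam•y) = (1-lam)*(f x) + lam*(f y) - μ/2*(lam*(1-lam))*‖x-y‖^2)
    (z : V) (hz : z ∈ 𝒱) (hmin : ∀ w ∈ 𝒱, f z ≤ f w) :
    ∀ w ∈ 𝒱, f z + μ/2 * ‖w - z‖^2 ≤ f w := by
  intro w hw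
  have key : ∀ lam : ℝ, 0 < lam → lam ≤ 1 →
      f z + μ/2*‖z-w‖^2 ≤ f w + μ/2*lam*‖z-w‖^2 := by
    intro lam h0 h1
    have hmem : (1-lam)•z + lam•w ∈ 𝒱 := hconv hz hw (by linarith) h0.le (by ring)
    have h2 := hmin _ hmem
    rw [hcomb z w lam h0.le h1] at h2
    nlinarith [h2, h0]
  have hwz : ‖w - z‖ = ‖z - w‖ := norm_sub_rev _ _
  rw [hwz]
  by_contra hcon
  push_neg at hcon
  set C := μ/2*‖z-w‖^2 with hC
  have hCnn : 0 ≤ C := by positivity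
  set ε := (f z + C) - f w with hε
  have hεpos : 0 < ε := by simp only [hε]; linarith
  have hlam : 0 < ε / (C + 1) := by positivity
  have h1 : min 1 (ε/(C+1)) ≤ 1 := min_le_left _ _
  have h0 : 0 < min 1 (ε/(C+1)) := lt_min one_pos hlam
  have := key _ h0 h1
  have hle : μ/2 * min 1 (ε/(C+1)) * ‖z-w‖^2 ≤ (ε/(C+1)) * C := by
    have : μ/2 * min 1 (ε/(C+1)) * ‖z-w‖^2 = min 1 (ε/(C+1)) * C := by rw [hC]; ring
    rw [this]
    exact mul_le_mul_of_nonneg_right (min_le_right _ _) hCnn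
  have hlt : (ε/(C+1)) * C < ε := by
    rw [div_mul_eq_mul_div, div_lt_iff₀ (by linarith)]
    nlinarith [hεpos, hCnn]
  simp only [hε] at hεpos hlt ⊢
  linarith

lemma descent_lemma [CompleteSpace V] (l : V → ℝ) (l' : V → V) (L : ℝ) (hL : 0 ≤ L)
    (hdiff : ∀ x : V, HasGradientAt l (l' x) x)
    (hlip : ∀ x y : V, ‖l' x - l' y‖ ≤ L * ‖x - y‖) (x y : V) :
    l y ≤ l x + ⟪l' x, y - x⟫ + L/2 * ‖y - x‖^2 := by
  set d := y - x with hd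
  have hc : ∀ s : ℝ, HasDerivAt (fun s : ℝ => l (x + s•d)) ⟪l' (x + s•d), d⟫ s := by
    intro s
    have h1 : HasDerivAt (fun s : ℝ => x + s•d) d s := by
      simpa using ((hasDerivAt_id s).smul_const d).const_add x
    have h2 := (hdiff (x + s•d)).hasFDerivAt
    have h3 := h2.comp_hasDerivAt s h1
    simpa [InnerProductSpace.toDual_apply_apply, Function.comp_def] using h3
  set g : ℝ → ℝ := fun s => l (x + s•d) - s*⟪l' x, d⟫ - L/2*s^2*‖d‖^2 with hg
  have hg' : ∀ s : ℝ, HasDerivAt g (⟪l' (x + s•d), d⟫ - ⟪l' x, d⟫ - L*s*‖d‖^2) s := by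
    intro s
    have h2 : HasDerivAt (fun s : ℝ => s*⟪l' x, d⟫) ⟪l' x, d⟫ s := by
      simpa using (hasDerivAt_id s).mul_const ⟪l' x, d⟫
    have h3 : HasDerivAt (fun s : ℝ => L/2*s^2*‖d‖^2) (L*s*‖d‖^2) s := by
      have := ((hasDerivAt_pow 2 s).const_mul (L/2)).mul_const (‖d‖^2)
      refine this.congr_deriv ?_
      ring
    simpa [hg, Pi.sub_def] using ((hc s).sub h2).sub h3
  have hanti : AntitoneOn g (Set.Icc (0:ℝ) 1) := by
    apply antitoneOn_of_deriv_nonpos (convex_Icc 0 1)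
    · exact fun s _ => ((hg' s).continuousAt).continuousWithinAt
    · exact fun s _ => ((hg' s).differentiableAt).differentiableWithinAt
    · intro s hs
      rw [(hg' s).deriv]
      rw [interior_Icc] at hs
      have hs0 : 0 < s := hs.1
      have h4 : ⟪l' (x + s•d), d⟫ - ⟪l' x, d⟫ ≤ L*s*‖d‖^2 := by
        rw [← inner_sub_left]
        calc ⟪l' (x + s•d) - l' x, d⟫ ≤ ‖l' (x + s•d) - l' x‖ * ‖d‖ := real_inner_le_norm _ _
          _ ≤ (L * ‖(x + s•d) - x‖) * ‖d‖ :=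
              mul_le_mul_of_nonneg_right (hlip _ _) (norm_nonneg _)
          _ = L*s*‖d‖^2 := by
              simp only [add_sub_cancel_left, norm_smul, Real.norm_eq_abs, abs_of_pos hs0]
              ring
      linarith
  have h01 := hanti (Set.mem_Icc.mpr ⟨le_refl 0, zero_le_one⟩)
      (Set.mem_Icc.mpr ⟨zero_le_one, le_refl 1⟩) zero_le_one
  simp only [hg, one_smul, zero_smul, add_zero, one_pow, zero_pow, mul_zero, zero_mul,
    mul_one, sub_zero] at h01
  have hxy : x + d = y := by rw [hd]; abel
  rw [hxy] at h01
  linarith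

end helpers

set_option maxHeartbeats 1000000 in
/-- For every `t ≥ 1`, the smallest PAGD residual satisfies
`min_{i ∈ {1,…,t}} ‖v_i − v̂_{i−1}‖ ≤ ‖v* − v₀‖ / √(L_l · Σ_{i=1}^t B_i)`. -/
theorem pagd_min_residual_bound
    {V : Type*} [NormedAddCommGroup V] [InnerProductSpace ℝ V] [CompleteSpace V]
    (𝒱 : Set V) (hVconv : Convex ℝ 𝒱)
    (σl Ll : ℝ) (hσ : 0 < σl) (hσL : σl ≤ Ll)
    (l : V → ℝ) (l' : V → V)
    (hldiff : ∀ x : V, HasGradientAt l (l' x) x)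
    (hlstrong : ∀ x y : V, l x + ⟪l' x, y - x⟫ + (σl / 2) * ‖y - x‖ ^ 2 ≤ l y)
    (hlLip : ∀ x y : V, ‖l' x - l' y‖ ≤ Ll * ‖x - y‖)
    (B b : ℕ → ℝ)
    (hB0 : B 0 = 0)
    (hB : ∀ t : ℕ, 1 ≤ t →
      B t = (1 / (2 * Ll)) * (1 + Real.sqrt (σl / (2 * Ll))) ^ (t - 1))
    (hb : ∀ t : ℕ, 1 ≤ t → b t = B t - B (t - 1))
    (v u vhat : ℕ → V)
    (hv0u0 : v 0 = u 0)
    (hvX : ∀ t, v t ∈ 𝒱) (huX : ∀ t, u t ∈ 𝒱) (hvhatX : ∀ t, vhat t ∈ 𝒱)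
    (hvhat : ∀ t : ℕ, 1 ≤ t →
      vhat (t - 1) = (B (t - 1) / B t) • v (t - 1) + (b t / B t) • u (t - 1))
    (hvmin : ∀ t : ℕ, 1 ≤ t → ∀ w ∈ 𝒱,
      ⟪l' (vhat (t - 1)), v t⟫ + Ll * ‖v t - vhat (t - 1)‖ ^ 2
        ≤ ⟪l' (vhat (t - 1)), w⟫ + Ll * ‖w - vhat (t - 1)‖ ^ 2)
    (φ : ℕ → V → ℝ)
    (hφ : ∀ (t : ℕ) (w : V), φ t w =
      (∑ i ∈ Finset.Icc 1 t,
        b i * (l (vhat (i - 1)) + ⟪l' (vhat (i - 1)), w - vhat (i - 1)⟫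
          + (σl / 2) * ‖w - vhat (i - 1)‖ ^ 2)) + (1 / 2) * ‖w - v 0‖ ^ 2)
    (humin : ∀ (t : ℕ), ∀ w ∈ 𝒱, φ t (u t) ≤ φ t w)
    (vst : V) (hvstX : vst ∈ 𝒱) (hvstmin : ∀ w ∈ 𝒱, l vst ≤ l w)
    (t : ℕ) (ht : 1 ≤ t) :
    (Finset.Icc 1 t).inf' (Finset.nonempty_Icc.mpr ht) (fun i => ‖v i - vhat (i - 1)‖)
      ≤ ‖vst - v 0‖ / Real.sqrt (Ll * ∑ i ∈ Finset.Icc 1 t, B i) := by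
  have hL : (0:ℝ) < Ll := lt_of_lt_of_le hσ hσL
  have hq0 : (0:ℝ) ≤ Real.sqrt (σl / (2*Ll)) := Real.sqrt_nonneg _
  have hq1 : (1:ℝ) ≤ 1 + Real.sqrt (σl / (2*Ll)) := by linarith
  -- basic facts on B and b
  have hBpos : ∀ s : ℕ, 1 ≤ s → 0 < B s := by
    intro s hs
    rw [hB s hs]
    positivity
  have hBnn : ∀ s : ℕ, 0 ≤ B s := by
    intro s
    rcases Nat.eq_zero_or_pos s with h | h
    · rw [h, hB0]
    · exact (hBpos s h).le
  have hBmono : ∀ s : ℕ, 1 ≤ s → B (s-1) ≤ B s := by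
    intro s hs
    rcases Nat.lt_or_ge s 2 with h2 | h2
    · have : s = 1 := by omega
      subst this
      simpa [hB0] using hBnn 1
    · have hs1 : 1 ≤ s - 1 := by omega
      rw [hB s hs, hB (s-1) hs1]
      have hexp : s - 1 - 1 ≤ s - 1 := by omega
      have := pow_le_pow_right₀ hq1 hexp
      have h2L : (0:ℝ) < 1/(2*Ll) := by positivity
      nlinarith [this, h2L]
  have hbnn : ∀ s : ℕ, 1 ≤ s → 0 ≤ b s := by
    intro s hs
    rw [hb s hs]
    linarith [hBmono s hs]
  have hsumb : ∀ s : ℕ, ∑ i ∈ Finset.Icc 1 s, b i = B s := by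
    intro s
    induction s with
    | zero => simp [hB0]
    | succ n ihn =>
      rw [Finset.sum_Icc_succ_top (Nat.le_add_left 1 n), ihn, hb (n+1) (Nat.le_add_left 1 n)]
      simp
  have hkey2 : ∀ s : ℕ, 1 ≤ s → 2*Ll*(b s)^2 ≤ B s * (1 + σl * B (s-1)) := by
    intro s hs
    rcases Nat.lt_or_ge s 2 with h2 | h2
    · have : s = 1 := by omega
      subst this
      rw [hb 1 le_rfl, hB 1 le_rfl]
      simp only [Nat.sub_self, hB0, pow_zero, mul_one, sub_zero]
      rw [mul_zero, add_zero, mul_one]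
      rw [show 2*Ll*(1/(2*Ll))^2 = 1/(2*Ll) from by field_simp]
    · have hs1 : 1 ≤ s - 1 := by omega
      set q := 1 + Real.sqrt (σl / (2*Ll)) with hqdef
      obtain ⟨k, rfl⟩ : ∃ k, s = k + 2 := ⟨s - 2, by omega⟩
      have hBs : B (k+2) = B (k+2-1) * q := by
        rw [hB (k+2) hs, hB (k+2-1) hs1]
        have e2 : k + 2 - 1 - 1 = k := by omega
        have e1 : k + 2 - 1 = k + 1 := by omega
        rw [e2, e1, pow_succ]
        ring
      set s := k + 2
      have hbs : b s = B (s-1) * (q - 1) := by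
        rw [hb s hs, hBs]; ring
      have hq2 : (q-1)^2 = σl/(2*Ll) := by
        rw [hqdef, add_sub_cancel_left, Real.sq_sqrt (by positivity)]
      have hB'pos : 0 < B (s-1) := hBpos (s-1) hs1
      have h2L : 2*Ll*(b s)^2 = σl * (B (s-1))^2 := by
        rw [hbs, mul_pow, hq2]
        field_simp
      rw [h2L, hBs]
      have hstep1 : σl * (B (s-1))^2 ≤ (1 + σl*B (s-1)) * B (s-1) := by nlinarith [hB'pos]
      have hstep2 : (1 + σl*B (s-1)) * B (s-1) ≤ (1+σl*B (s-1)) * (B (s-1) * q) := by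
        have hpos : (0:ℝ) ≤ 1 + σl*B (s-1) := by positivity
        nlinarith [mul_nonneg (mul_nonneg hpos hB'pos.le) (sub_nonneg.mpr hq1)]
      nlinarith [hstep1, hstep2]
  -- combination identity for φ
  have hφcomb : ∀ s : ℕ, ∀ x y : V, ∀ lam : ℝ,
      φ s ((1-lam)•x + lam•y)
        = (1-lam)*(φ s x) + lam*(φ s y) - (σl*B s+1)/2*(lam*(1-lam))*‖x-y‖^2 := by
    intro s x y lam
    rw [hφ, hφ, hφ]
    have hterm : ∀ i ∈ Finset.Icc 1 s,
        b i * (l (vhat (i - 1)) + ⟪l' (vhat (i - 1)), ((1-lam)•x + lam•y) - vhat (i - 1)⟫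
          + (σl / 2) * ‖((1-lam)•x + lam•y) - vhat (i - 1)‖ ^ 2)
        = (1-lam)*(b i * (l (vhat (i - 1)) + ⟪l' (vhat (i - 1)), x - vhat (i - 1)⟫
            + (σl / 2) * ‖x - vhat (i - 1)‖ ^ 2))
          + lam*(b i * (l (vhat (i - 1)) + ⟪l' (vhat (i - 1)), y - vhat (i - 1)⟫
            + (σl / 2) * ‖y - vhat (i - 1)‖ ^ 2))
          - (σl/2*(lam*(1-lam))*‖x-y‖^2) * b i := by
      intro i _
      have h1 := comb_norm_sq x y (vhat (i-1)) lam
      have h2 : ((1-lam)•x + lam•y) - vhat (i-1)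
          = (1-lam)•(x - vhat (i-1)) + lam•(y - vhat (i-1)) := by
        rw [smul_sub, smul_sub, sub_smul, sub_smul, one_smul, one_smul]
        abel
      rw [h1, h2, inner_add_right, real_inner_smul_right, real_inner_smul_right]
      ring
    rw [Finset.sum_congr rfl hterm]
    rw [Finset.sum_sub_distrib, Finset.sum_add_distrib, ← Finset.mul_sum, ← Finset.mul_sum,
        ← Finset.mul_sum, hsumb s, comb_norm_sq x y (v 0) lam]
    ring
  -- the key invariant
  have key : ∀ s : ℕ,
      B s * l (v s) + Ll/2 * ∑ i ∈ Finset.Icc 1 s, B i * ‖v i - vhat (i-1)‖^2 ≤ φ s (u s) := by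
    intro s
    induction s with
    | zero => simp [hφ, hB0, hv0u0]
    | succ n ih =>
      have ht1 : (1:ℕ) ≤ n + 1 := Nat.le_add_left 1 n
      have hvh := hvhat (n+1) ht1
      simp only [Nat.add_sub_cancel] at hvh
      have hBtpos : 0 < B (n+1) := hBpos (n+1) ht1
      have hbt : 0 ≤ b (n+1) := hbnn (n+1) ht1
      have hBn : 0 ≤ B n := hBnn n
      have hBsum : B (n+1) = B n + b (n+1) := by
        have h := hb (n+1) ht1
        simp only [Nat.add_sub_cancel] at h
        linarith
      have hc1 : B (n+1) * (B n / B (n+1)) = B n := by field_simp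
      have hc2 : B (n+1) * (b (n+1) / B (n+1)) = b (n+1) := by field_simp
      have hvhat_eq : B (n+1) • vhat n = B n • v n + b (n+1) • u n := by
        rw [hvh, smul_add, smul_smul, smul_smul, hc1, hc2]
      -- strong min for φ n
      have hμ' : (0:ℝ) ≤ σl * B n + 1 := by positivity
      have hsm := strong_min 𝒱 hVconv (φ n) (σl*B n + 1) hμ'
        (fun x y lam _ _ => hφcomb n x y lam) (u n) (huX n) (humin n)
      -- strong min for the projection objective
      have hvm := hvmin (n+1) ht1
      simp only [Nat.add_sub_cancel] at hvm
      have hVI := strong_min 𝒱 hVconv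
        (fun w => ⟪l' (vhat n), w⟫ + Ll * ‖w - vhat n‖^2) (2*Ll) (by positivity)
        (by
          intro x y lam _ _
          rw [comb_norm_sq x y (vhat n) lam]
          have h2 : ((1-lam)•x + lam•y) = (1-lam)•x + lam•y := rfl
          rw [inner_add_right, real_inner_smul_right, real_inner_smul_right]
          ring)
        (v (n+1)) (hvX (n+1)) hvm
      -- the auxiliary point yy
      set yy := (B n / B (n+1)) • v n + (b (n+1) / B (n+1)) • u (n+1) with hyy
      have hyyX : yy ∈ 𝒱 := hVconv (hvX n) (huX (n+1))
        (div_nonneg hBn hBtpos.le) (div_nonneg hbt hBtpos.le)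
        (by rw [← add_div, ← hBsum, div_self hBtpos.ne'])
      have hyv : yy - vhat n = (b (n+1) / B (n+1)) • (u (n+1) - u n) := by
        rw [hyy, hvh, smul_sub]
        abel
      have hinner_y : ⟪l' (vhat n), yy - vhat n⟫
          = (b (n+1)/B (n+1)) * ⟪l' (vhat n), u (n+1) - u n⟫ := by
        rw [hyv, real_inner_smul_right]
      have hnorm_y : ‖yy - vhat n‖^2 = (b (n+1)/B (n+1))^2 * ‖u (n+1) - u n‖^2 := by
        rw [hyv, norm_smul, mul_pow, Real.norm_eq_abs, sq_abs]
      -- descent lemma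
      have hdes := descent_lemma l l' Ll hL.le hldiff hlLip (vhat n) (v (n+1))
      -- VI at yy
      have hVIy := hVI yy hyyX
      -- step A
      have e1 : ⟪l' (vhat n), v (n+1) - vhat n⟫
          = ⟪l' (vhat n), v (n+1)⟫ - ⟪l' (vhat n), vhat n⟫ := inner_sub_right _ _ _
      have e2 : ⟪l' (vhat n), yy - vhat n⟫
          = ⟪l' (vhat n), yy⟫ - ⟪l' (vhat n), vhat n⟫ := inner_sub_right _ _ _
      have hA : l (v (n+1)) + Ll/2*‖v (n+1) - vhat n‖^2
          ≤ l (vhat n) + ⟪l' (vhat n), yy - vhat n⟫ + Ll*‖yy - vhat n‖^2 := by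
        nlinarith [hVIy, hdes, e1, e2, mul_nonneg hL.le (sq_nonneg ‖yy - v (n+1)‖)]
      rw [hinner_y, hnorm_y] at hA
      -- step B : multiply by B (n+1)
      have hkey2' := hkey2 (n+1) ht1
      simp only [Nat.add_sub_cancel] at hkey2'
      have h2' : Ll*(b (n+1))^2/B (n+1) ≤ (σl*B n+1)/2 := by
        rw [div_le_iff₀ hBtpos]
        nlinarith [hkey2']
      have hid2 : B (n+1)*(Ll*((b (n+1)/B (n+1))^2 * ‖u (n+1) - u n‖^2))
          = (Ll*(b (n+1))^2/B (n+1)) * ‖u (n+1) - u n‖^2 := by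
        field_simp
      have hB2 : B (n+1) * l (v (n+1)) + (Ll*B (n+1)/2)*‖v (n+1) - vhat n‖^2
          ≤ B (n+1) * l (vhat n) + b (n+1) * ⟪l' (vhat n), u (n+1) - u n⟫
            + (σl*B n+1)/2 * ‖u (n+1) - u n‖^2 := by
        have h1 := mul_le_mul_of_nonneg_left hA hBtpos.le
        have hid1 : B (n+1)*((b (n+1)/B (n+1)) * ⟪l' (vhat n), u (n+1) - u n⟫)
            = b (n+1) * ⟪l' (vhat n), u (n+1) - u n⟫ := by
          rw [← mul_assoc, hc2]
        nlinarith [h1, h2', sq_nonneg ‖u (n+1) - u n‖, hid1, hid2]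
      -- step C : assemble
      have hw := huX (n+1)
      have hφt : φ (n+1) (u (n+1)) = φ n (u (n+1))
          + b (n+1)*(l (vhat n) + ⟪l' (vhat n), u (n+1) - vhat n⟫
            + σl/2*‖u (n+1) - vhat n‖^2) := by
        rw [hφ, hφ, Finset.sum_Icc_succ_top ht1]
        simp only [Nat.add_sub_cancel]
        ring
      have hsm' := hsm (u (n+1)) hw
      have hconvl : l (vhat n) + ⟪l' (vhat n), v n - vhat n⟫ ≤ l (v n) := by
        have := hlstrong (vhat n) (v n)
        nlinarith [sq_nonneg ‖v n - vhat n‖, hσ]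
      have hconvl' := mul_le_mul_of_nonneg_left hconvl hBn
      have hip : B n * ⟪l' (vhat n), v n - vhat n⟫
          + b (n+1) * ⟪l' (vhat n), u (n+1) - vhat n⟫
          = b (n+1) * ⟪l' (vhat n), u (n+1) - u n⟫ := by
        rw [← real_inner_smul_right, ← real_inner_smul_right, ← real_inner_smul_right,
            ← inner_add_right]
        congr 1
        have h5 : B n • vhat n + b (n+1) • vhat n = B n • v n + b (n+1) • u n := by
          rw [← add_smul, ← hBsum, hvhat_eq]
        rw [smul_sub, smul_sub, smul_sub]
        have h6 : B n • v n - B n • vhat n = b (n+1) • vhat n - b (n+1) • u n := by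
          rw [sub_eq_sub_iff_add_eq_add, add_comm (b (n+1) • vhat n), ← h5]
        rw [h6]
        abel
      have hBl : B (n+1) * l (vhat n) = B n * l (vhat n) + b (n+1) * l (vhat n) := by
        rw [hBsum]; ring
      have hpos1 : 0 ≤ b (n+1)*(σl/2*‖u (n+1) - vhat n‖^2) :=
        mul_nonneg hbt (by positivity)
      rw [Finset.sum_Icc_succ_top ht1]
      simp only [Nat.add_sub_cancel]
      linarith [hφt, hsm', ih, hconvl', hip, hBl, hB2, hpos1]
  -- final assembly
  have hEt := key t
  have h1 := humin t vst hvstX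
  have h2 : φ t vst ≤ B t * l vst + 1/2 * ‖vst - v 0‖^2 := by
    rw [hφ]
    have hterm : ∀ i ∈ Finset.Icc 1 t,
        b i * (l (vhat (i - 1)) + ⟪l' (vhat (i - 1)), vst - vhat (i - 1)⟫
          + (σl / 2) * ‖vst - vhat (i - 1)‖ ^ 2) ≤ b i * l vst := by
      intro i hi
      have hi1 : 1 ≤ i := (Finset.mem_Icc.mp hi).1
      exact mul_le_mul_of_nonneg_left (hlstrong (vhat (i-1)) vst) (hbnn i hi1)
    calc (∑ i ∈ Finset.Icc 1 t, b i * (l (vhat (i - 1))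
            + ⟪l' (vhat (i - 1)), vst - vhat (i - 1)⟫
            + (σl / 2) * ‖vst - vhat (i - 1)‖ ^ 2)) + 1/2 * ‖vst - v 0‖^2
        ≤ (∑ i ∈ Finset.Icc 1 t, b i * l vst) + 1/2 * ‖vst - v 0‖^2 := by
          exact add_le_add_left (Finset.sum_le_sum hterm) _
      _ = B t * l vst + 1/2 * ‖vst - v 0‖^2 := by
          rw [← Finset.sum_mul, hsumb t]
  have h3 : l vst ≤ l (v t) := hvstmin _ (hvX t)
  have hBt : 0 ≤ B t := hBnn t
  have hS : Ll * ∑ i ∈ Finset.Icc 1 t, B i * ‖v i - vhat (i-1)‖^2 ≤ ‖vst - v 0‖^2 := by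
    nlinarith [hEt, h1, h2, mul_le_mul_of_nonneg_left h3 hBt]
  set m := (Finset.Icc 1 t).inf' (Finset.nonempty_Icc.mpr ht)
    (fun i => ‖v i - vhat (i - 1)‖) with hm
  have h1t : (1:ℕ) ∈ Finset.Icc 1 t := Finset.mem_Icc.mpr ⟨le_rfl, ht⟩
  have hmnn : 0 ≤ m := by
    rw [hm, Finset.le_inf'_iff]
    intro i _
    exact norm_nonneg _
  have hmle : ∀ i ∈ Finset.Icc 1 t, m ≤ ‖v i - vhat (i-1)‖ := by
    intro i hi
    exact Finset.inf'_le _ hi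
  have hsum_le : ∑ i ∈ Finset.Icc 1 t, B i * m^2
      ≤ ∑ i ∈ Finset.Icc 1 t, B i * ‖v i - vhat (i-1)‖^2 := by
    apply Finset.sum_le_sum
    intro i hi
    have hle := hmle i hi
    have hBi := hBnn i
    have h := mul_le_mul_of_nonneg_left (mul_le_mul hle hle hmnn (norm_nonneg _)) hBi
    nlinarith [h]
  have hPsum : 0 < ∑ i ∈ Finset.Icc 1 t, B i := by
    apply Finset.sum_pos' (fun i _ => hBnn i)
    exact ⟨1, h1t, hBpos 1 le_rfl⟩
  have hP : 0 < Ll * ∑ i ∈ Finset.Icc 1 t, B i := by positivity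
  have hmain : (Ll * ∑ i ∈ Finset.Icc 1 t, B i) * m^2 ≤ ‖vst - v 0‖^2 := by
    have : (Ll * ∑ i ∈ Finset.Icc 1 t, B i) * m^2
        = Ll * ∑ i ∈ Finset.Icc 1 t, B i * m^2 := by
      rw [← Finset.sum_mul]
      ring
    rw [this]
    calc Ll * ∑ i ∈ Finset.Icc 1 t, B i * m^2
        ≤ Ll * ∑ i ∈ Finset.Icc 1 t, B i * ‖v i - vhat (i-1)‖^2 := by
          exact mul_le_mul_of_nonneg_left hsum_le hL.le
      _ ≤ ‖vst - v 0‖^2 := hS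
  -- conclude
  rw [le_div_iff₀ (Real.sqrt_pos.mpr hP)]
  have hsq : (Real.sqrt (Ll * ∑ i ∈ Finset.Icc 1 t, B i))^2
      = Ll * ∑ i ∈ Finset.Icc 1 t, B i := Real.sq_sqrt hP.le
  nlinarith [hmain, hsq, hmnn, Real.sqrt_nonneg (Ll * ∑ i ∈ Finset.Icc 1 t, B i),
    norm_nonneg (vst - v 0), mul_nonneg hmnn (Real.sqrt_nonneg (Ll * ∑ i ∈ Finset.Icc 1 t, B i))]
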